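/- Let A ∈ ℝ^{m×n} be a matrix whose rows a₁ᵀ, …, a_mᵀ all have Euclidean norm 1 and which has n linearly independent rows, let b ∈ ℝ^m, let P = {x ∈ ℝⁿ : Ax ≤ b}, let u₁, …, uₙ be n linearly independent rows of A, and let ε > 0. Let λ be drawn uniformly at random from (0,1]ⁿ and set w₁ = −Σ_{k=1}^n λ_k u_k. Then the probability that there exist two neighboring vertices z₁, z₂ of P with |w₁ᵀ(z₂ − z₁)| ≤ ε·‖z₂ − z₁‖ is at most 2mⁿε/δ(A). -/

import Mathlib

open scoped RealInnerProductSpace BigOperators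
open MeasureTheory ProbabilityTheory Matrix

noncomputable section

/-- Identity map from plain vectors to Euclidean space (L2 norm). -/
def toE {n : ℕ} (x : Fin n → ℝ) : EuclideanSpace ℝ (Fin n) := WithLp.toLp 2 x

/-- Identity map from Euclidean space to plain vectors. -/
def ofE {n : ℕ} (x : EuclideanSpace ℝ (Fin n)) : Fin n → ℝ := x

/-- Normalization N(x) = x / ‖x‖. -/
def nrm {n : ℕ} (x : EuclideanSpace ℝ (Fin n)) : EuclideanSpace ℝ (Fin n) := ‖x‖⁻¹ • x

/-- δ̂(S, v): the norm of the projection of v onto the orthogonal complement of span S,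
divided by ‖v‖ (the sine of the angle between v and span S). -/
def deltaHat {n : ℕ} (S : Set (EuclideanSpace ℝ (Fin n))) (v : EuclideanSpace ℝ (Fin n)) : ℝ :=
  ‖(((Submodule.span ℝ S)ᗮ).orthogonalProjection v : EuclideanSpace ℝ (Fin n))‖ / ‖v‖

/-- δ(z₁, …, zₙ) = min over k of δ̂({z_i : i ≠ k}, z_k). -/
def deltaVec {n : ℕ} (z : Fin n → EuclideanSpace ℝ (Fin n)) : ℝ :=
  ⨅ k : Fin n, deltaHat (z '' {i | i ≠ k}) (z k)

/-- δ(A) for rows a₁, …, a_m: the minimum of δ over all choices of n linearly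
independent rows. -/
def deltaRows {m n : ℕ} (a : Fin m → EuclideanSpace ℝ (Fin n)) : ℝ :=
  sInf { d | ∃ f : Fin n → Fin m, LinearIndependent ℝ (a ∘ f) ∧ d = deltaVec (a ∘ f) }

/-- A vertex of the polyhedron {x : ∀ i, ⟪a i, x⟫ ≤ b i}. -/
def IsVertex {m n : ℕ} (a : Fin m → EuclideanSpace ℝ (Fin n)) (b : Fin m → ℝ)
    (z : EuclideanSpace ℝ (Fin n)) : Prop :=
  (∀ i, ⟪a i, z⟫ ≤ b i) ∧ Submodule.span ℝ (a '' {i | ⟪a i, z⟫ = b i}) = ⊤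

/-- Two distinct vertices are neighboring if n−1 linearly independent constraints are
tight at both. -/
def Neighboring {m n : ℕ} (a : Fin m → EuclideanSpace ℝ (Fin n)) (b : Fin m → ℝ)
    (z₁ z₂ : EuclideanSpace ℝ (Fin n)) : Prop :=
  IsVertex a b z₁ ∧ IsVertex a b z₂ ∧ z₁ ≠ z₂ ∧
    ∃ s : Finset (Fin m), s.card = n - 1 ∧
      LinearIndependent ℝ (fun i : s => a i) ∧
      ∀ i ∈ s, ⟪a i, z₁⟫ = b i ∧ ⟪a i, z₂⟫ = b i

/-- The largest absolute value of a sub-determinant of size k. -/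
def subdetSup {m n : ℕ} (A : Matrix (Fin m) (Fin n) ℝ) (k : ℕ) : ℝ :=
  ⨆ (f : Fin k → Fin m) (_ : Function.Injective f) (g : Fin k → Fin n)
    (_ : Function.Injective g), |(A.submatrix f g).det|

end

/-!
For neighbouring vertices `z₁, z₂`, the edge direction `z₂ - z₁` is a nonzero multiple of the unit
normal `v` of the span of the `n - 1` rows tight at both, so the event forces
`|∑ λₖ ⟪uₖ, v⟫| ≤ ε`. Some `uₖ` lies outside that span and completes the tight rows to `n`
independent rows, whence `|⟪uₖ, v⟫| = δ̂(tight rows, uₖ) ≥ δ(A)`. Conditioning on the other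
coordinates, `λₖ` must then fall in an interval of length `2ε / δ(A)`. A union bound over the at
most `mⁿ` sets of tight rows finishes the proof.
-/

open Module
open scoped ENNReal

theorem MeasureTheory.Measure.pi_le_of_forall_update_preimage_le {ι : Type*} [Fintype ι]
    [DecidableEq ι] {X : ι → Type*} [∀ i, MeasurableSpace (X i)] (μ : ∀ i, Measure (X i))
    [∀ i, IsProbabilityMeasure (μ i)] {S : Set (∀ i, X i)} (hS : MeasurableSet S) (i : ι)
    {C : ℝ≥0∞} (hC : ∀ x, μ i (Function.update x i ⁻¹' S) ≤ C) : Measure.pi μ S ≤ C := by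
  have hmarginal : ∫⋯∫⁻_{i}, S.indicator 1 ∂μ ≤ ∫⋯∫⁻_{i}, (fun _ => C) ∂μ := by
    intro x
    simp only [lmarginal_singleton, lintegral_const, measure_univ, mul_one]
    calc ∫⁻ t, S.indicator 1 (Function.update x i t) ∂μ i
        = ∫⁻ t, (Function.update x i ⁻¹' S).indicator 1 t ∂μ i :=
          lintegral_congr fun t => (Set.indicator_comp_right _).symm
      _ = μ i (Function.update x i ⁻¹' S) := lintegral_indicator_one (measurable_update x hS)
      _ ≤ C := hC x
  calc Measure.pi μ S = ∫⁻ x, S.indicator 1 x ∂Measure.pi μ := (lintegral_indicator_one hS).symm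
    _ ≤ ∫⁻ _, C ∂Measure.pi μ :=
      lintegral_le_of_lmarginal_le {i} (measurable_one.indicator hS) measurable_const hmarginal
    _ = C := by simp

theorem Real.volume_setOf_abs_mul_add_le {c : ℝ} (hc : c ≠ 0) (r ε : ℝ) :
    volume {t : ℝ | |t * c + r| ≤ ε} = ENNReal.ofReal (2 * ε / |c|) := by
  have hpreimage : {t : ℝ | |t * c + r| ≤ ε} =
      (fun t => t * c) ⁻¹' ((fun s => s + r) ⁻¹' Metric.closedBall 0 ε) := by
    ext t
    simp [Real.dist_eq]
  rw [hpreimage, Real.volume_preimage_mul_right hc, measure_preimage_add_right,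
    Real.volume_closedBall, ← ENNReal.ofReal_mul (abs_nonneg _), abs_inv, inv_mul_eq_div]

theorem measure_pi_setOf_abs_sum_mul_le {ι : Type*} [Fintype ι] [DecidableEq ι]
    (μ : ι → Measure ℝ) [∀ i, IsProbabilityMeasure (μ i)] {k : ι} (hμ : μ k ≤ volume)
    {c : ι → ℝ} (hc : c k ≠ 0) (ε : ℝ) :
    Measure.pi μ {l | |∑ i, l i * c i| ≤ ε} ≤ ENNReal.ofReal (2 * ε / |c k|) := by
  refine Measure.pi_le_of_forall_update_preimage_le μ
    (measurableSet_le (by fun_prop) measurable_const) k fun x => ?_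
  have hsection : Function.update x k ⁻¹' {l | |∑ i, l i * c i| ≤ ε} =
      {t | |t * c k + ∑ i ∈ Finset.univ.erase k, x i * c i| ≤ ε} := by
    ext t
    simp only [Set.mem_preimage, Set.mem_ofPred_eq, Function.update_self,
      ← Finset.add_sum_erase _ _ (Finset.mem_univ k)]
    rw [Finset.sum_congr rfl fun i hi => by rw [Function.update_of_ne (Finset.ne_of_mem_erase hi)]]
  rw [hsection, ← Real.volume_setOf_abs_mul_add_le hc]
  exact hμ _

theorem Submodule.exists_norm_eq_one_orthogonal_eq_span {E : Type*} [NormedAddCommGroup E]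
    [InnerProductSpace ℝ E] [FiniteDimensional ℝ E] {K : Submodule ℝ E}
    (hK : finrank ℝ K + 1 = finrank ℝ E) : ∃ v : E, ‖v‖ = 1 ∧ Kᗮ = ℝ ∙ v := by
  have hKperp : finrank ℝ Kᗮ = 1 := finrank_add_finrank_orthogonal' hK
  obtain ⟨x, hx, -⟩ := finrank_eq_one_iff'.1 hKperp
  have hx₀ : (x : E) ≠ 0 := by simpa using hx
  refine ⟨‖(x : E)‖⁻¹ • (x : E), norm_smul_inv_norm hx₀, ?_⟩
  exact eq_span_singleton_of_mem_of_finrank_eq_one hKperp (Kᗮ.smul_mem _ x.2)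
    (smul_ne_zero (inv_ne_zero (norm_ne_zero_iff.2 hx₀)) hx₀)

theorem Submodule.finrank_span_image_finset {ι E : Type*} [AddCommGroup E] [Module ℝ E]
    {a : ι → E} {s : Finset ι} (hli : LinearIndependent ℝ (fun i : s => a i)) :
    finrank ℝ (span ℝ (a '' s)) = s.card := by
  rw [Set.image_eq_range]
  exact (finrank_span_eq_card hli).trans (Fintype.card_coe s)

theorem Submodule.sub_mem_orthogonal_span_image {ι E : Type*} [NormedAddCommGroup E]
    [InnerProductSpace ℝ E] {a : ι → E} {s : Set ι} {z₁ z₂ : E}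
    (h : ∀ i ∈ s, ⟪a i, z₁⟫ = ⟪a i, z₂⟫) : z₂ - z₁ ∈ (span ℝ (a '' s))ᗮ := by
  refine (span_singleton_le_iff_mem _ _).1 (isOrtho_iff_le.1 (isOrtho_span.2 ?_))
  rintro _ rfl _ ⟨i, hi, rfl⟩
  rw [real_inner_comm, inner_sub_right, h i hi, sub_self]

section Delta

variable {n : ℕ}

theorem deltaHat_nonneg (S : Set (EuclideanSpace ℝ (Fin n))) (v : EuclideanSpace ℝ (Fin n)) :
    0 ≤ deltaHat S v :=
  div_nonneg (norm_nonneg _) (norm_nonneg _)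

theorem deltaHat_pos {S : Set (EuclideanSpace ℝ (Fin n))} {v : EuclideanSpace ℝ (Fin n)}
    (hv : v ∉ Submodule.span ℝ S) : 0 < deltaHat S v := by
  have hv₀ : v ≠ 0 := fun h => hv (h ▸ Submodule.zero_mem _)
  have hproj :
      ((Submodule.span ℝ S)ᗮ.orthogonalProjectionOnto v : EuclideanSpace ℝ (Fin n)) ≠ 0 := by
    rw [ne_eq, Submodule.coe_eq_zero, Submodule.orthogonalProjectionOnto_eq_zero_iff,
      Submodule.orthogonal_orthogonal]
    exact hv
  exact div_pos (norm_pos_iff.mpr hproj) (norm_pos_iff.mpr hv₀)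

theorem deltaHat_eq_abs_inner_div_norm {S : Set (EuclideanSpace ℝ (Fin n))}
    {v : EuclideanSpace ℝ (Fin n)} (hv : ‖v‖ = 1) (hS : (Submodule.span ℝ S)ᗮ = ℝ ∙ v)
    (x : EuclideanSpace ℝ (Fin n)) : deltaHat S x = |⟪x, v⟫| / ‖x‖ := by
  -- stated for a variable `K`, since `hS` cannot be rewritten under the projection's instance
  have hproj : ∀ K : Submodule ℝ (EuclideanSpace ℝ (Fin n)), K = ℝ ∙ v →
      ‖(K.orthogonalProjectionOnto x : EuclideanSpace ℝ (Fin n))‖ = |⟪x, v⟫| := by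
    rintro K rfl
    rw [Submodule.coe_orthogonalProjectionOnto_apply, Submodule.starProjection_unit_singleton ℝ hv,
      norm_smul, hv, mul_one, real_inner_comm, Real.norm_eq_abs]
  rw [deltaHat, hproj _ hS]

theorem deltaVec_le_deltaHat (z : Fin n → EuclideanSpace ℝ (Fin n)) (k : Fin n) :
    deltaVec z ≤ deltaHat (z '' {i | i ≠ k}) (z k) :=
  ciInf_le (Set.finite_range _).bddBelow k

theorem deltaVec_pos (hn : n ≠ 0) {z : Fin n → EuclideanSpace ℝ (Fin n)}
    (hz : LinearIndependent ℝ z) : 0 < deltaVec z := by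
  have : Nonempty (Fin n) := ⟨⟨0, Nat.pos_of_ne_zero hn⟩⟩
  obtain ⟨k, hk⟩ := exists_eq_ciInf_of_finite (f := fun k => deltaHat (z '' {i | i ≠ k}) (z k))
  rw [deltaVec, ← hk]
  exact deltaHat_pos (hz.notMem_span_image (by simp))

variable {m : ℕ} (a : Fin m → EuclideanSpace ℝ (Fin n))

theorem deltaRows_le_deltaVec {f : Fin n → Fin m} (hf : LinearIndependent ℝ (a ∘ f)) :
    deltaRows a ≤ deltaVec (a ∘ f) := by
  refine csInf_le ⟨0, ?_⟩ (show deltaVec (a ∘ f) ∈ _ from ⟨f, hf, rfl⟩)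
  rintro d ⟨f, -, rfl⟩
  exact Real.iInf_nonneg fun _ => deltaHat_nonneg _ _

theorem deltaRows_pos (hn : n ≠ 0) {u : Fin n → Fin m} (hu : LinearIndependent ℝ (a ∘ u)) :
    0 < deltaRows a := by
  set D : Set ℝ := {d | ∃ f : Fin n → Fin m, LinearIndependent ℝ (a ∘ f) ∧ d = deltaVec (a ∘ f)}
  have hfinite : D.Finite := (Set.finite_range fun f : Fin n → Fin m => deltaVec (a ∘ f)).subset
    (by rintro d ⟨f, -, rfl⟩; exact ⟨f, rfl⟩)
  obtain ⟨f, hf, hmin⟩ := Set.Nonempty.csInf_mem (s := D) ⟨_, u, hu, rfl⟩ hfinite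
  rw [deltaRows, hmin]
  exact deltaVec_pos hn hf

end Delta

theorem deltaRows_le_deltaHat {m n : ℕ} (a : Fin m → EuclideanSpace ℝ (Fin (n + 1)))
    {s : Finset (Fin m)} (hs : s.card = n) (hli : LinearIndependent ℝ (fun i : s => a i))
    {j : Fin m} (hj : a j ∉ Submodule.span ℝ (a '' s)) :
    deltaRows a ≤ deltaHat (a '' s) (a j) := by
  set g := s.orderEmbOfFin hs
  have hrange : Set.range (a ∘ g) = a '' s := by
    rw [Set.range_comp, Finset.range_orderEmbOfFin]
  have hg : LinearIndependent ℝ (a ∘ g) := by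
    convert hli.comp (s.orderIsoOfFin hs) (s.orderIsoOfFin hs).injective using 1
    ext1 i
    simp [g, Finset.coe_orderIsoOfFin_apply]
  have hf : LinearIndependent ℝ (a ∘ Fin.snoc g j) := by
    rw [Fin.comp_snoc]
    exact hg.finSnoc (hrange ▸ hj)
  have himage : (a ∘ Fin.snoc g j) '' {i | i ≠ Fin.last n} = a '' s := by
    have hne_last : {i | i ≠ Fin.last n} = Set.range Fin.castSucc := by
      rw [Fin.range_castSucc]
      ext i
      simp [← Fin.lt_last_iff_ne_last, Fin.lt_def]
    rw [hne_last, ← Set.range_comp, ← hrange, Function.comp_assoc, Fin.snoc_comp_castSucc]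
  calc deltaRows a ≤ deltaVec (a ∘ Fin.snoc g j) := deltaRows_le_deltaVec a hf
    _ ≤ deltaHat ((a ∘ Fin.snoc g j) '' {i | i ≠ Fin.last n})
        ((a ∘ Fin.snoc g j) (Fin.last n)) := deltaVec_le_deltaHat _ _
    _ = deltaHat (a '' s) (a j) := by rw [himage, Function.comp_apply, Fin.snoc_last]

theorem Neighboring.exists_sub_mem_orthogonal {m n : ℕ} {a : Fin m → EuclideanSpace ℝ (Fin n)}
    {b : Fin m → ℝ} {z₁ z₂ : EuclideanSpace ℝ (Fin n)} (h : Neighboring a b z₁ z₂) :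
    ∃ s : Finset (Fin m), s.card = n - 1 ∧ LinearIndependent ℝ (fun i : s => a i) ∧
      z₂ - z₁ ∈ (Submodule.span ℝ (a '' s))ᗮ ∧ z₂ - z₁ ≠ 0 := by
  obtain ⟨-, -, hne, s, hs, hli, htight⟩ := h
  refine ⟨s, hs, hli, ?_, sub_ne_zero.2 hne.symm⟩
  exact Submodule.sub_mem_orthogonal_span_image fun i hi =>
    (htight i hi).1.trans (htight i hi).2.symm

theorem exists_deltaRows_le_abs_inner {m n : ℕ} {a : Fin m → EuclideanSpace ℝ (Fin (n + 1))}
    (hnorm : ∀ i, ‖a i‖ = 1) {u : Fin (n + 1) → Fin m} (hu : LinearIndependent ℝ (a ∘ u))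
    {s : Finset (Fin m)} (hs : s.card = n) (hli : LinearIndependent ℝ (fun i : s => a i))
    {v : EuclideanSpace ℝ (Fin (n + 1))} (hv : ‖v‖ = 1)
    (hsv : (Submodule.span ℝ (a '' s))ᗮ = ℝ ∙ v) :
    ∃ k, deltaRows a ≤ |⟪a (u k), v⟫| := by
  have hspan : Submodule.span ℝ (a '' s) ≠ ⊤ := by
    intro htop
    have := Submodule.finrank_span_image_finset hli
    rw [htop, finrank_top, finrank_euclideanSpace_fin] at this
    omega
  obtain ⟨k, hk⟩ : ∃ k, a (u k) ∉ Submodule.span ℝ (a '' s) := by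
    by_contra! h
    refine hspan (eq_top_iff.2 ?_)
    rw [← hu.span_eq_top_of_card_eq_finrank (by simp)]
    exact Submodule.span_le.2 (Set.range_subset_iff.2 h)
  refine ⟨k, ?_⟩
  have := deltaRows_le_deltaHat a hs hli hk
  rwa [deltaHat_eq_abs_inner_div_norm hv hsv, hnorm, div_one] at this

def nearlyOrthogonalParams {m n : ℕ} (a : Fin m → EuclideanSpace ℝ (Fin n)) (u : Fin n → Fin m)
    (K : Submodule ℝ (EuclideanSpace ℝ (Fin n))) (ε : ℝ) : Set (Fin n → ℝ) :=
  {l | ∃ d ∈ K, d ≠ 0 ∧ |⟪-∑ k, l k • a (u k), d⟫| ≤ ε * ‖d‖}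

theorem measure_pi_nearlyOrthogonalParams_le {m n : ℕ}
    {a : Fin m → EuclideanSpace ℝ (Fin (n + 1))} (hnorm : ∀ i, ‖a i‖ = 1)
    {u : Fin (n + 1) → Fin m} (hu : LinearIndependent ℝ (a ∘ u))
    (μ : Fin (n + 1) → Measure ℝ) [∀ i, IsProbabilityMeasure (μ i)] (hμ : ∀ i, μ i ≤ volume)
    {s : Finset (Fin m)} (hs : s.card = n) (hli : LinearIndependent ℝ (fun i : s => a i))
    (ε : ℝ) :
    Measure.pi μ (nearlyOrthogonalParams a u (Submodule.span ℝ (a '' s))ᗮ ε) ≤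
      ENNReal.ofReal (2 * ε / deltaRows a) := by
  have hrank : finrank ℝ (Submodule.span ℝ (a '' s)) + 1 =
      finrank ℝ (EuclideanSpace ℝ (Fin (n + 1))) := by
    rw [Submodule.finrank_span_image_finset hli, hs, finrank_euclideanSpace_fin]
  obtain ⟨v, hv, hsv⟩ := Submodule.exists_norm_eq_one_orthogonal_eq_span hrank
  obtain ⟨k, hk⟩ := exists_deltaRows_le_abs_inner hnorm hu hs hli hv hsv
  have hδ : 0 < deltaRows a := deltaRows_pos a n.succ_ne_zero hu
  have hsub : nearlyOrthogonalParams a u (Submodule.span ℝ (a '' s))ᗮ ε ⊆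
      {l | |∑ i, l i * ⟪a (u i), v⟫| ≤ ε} := by
    rintro l ⟨d, hd, hd₀, hl⟩
    rw [hsv] at hd
    obtain ⟨t, rfl⟩ := Submodule.mem_span_singleton.1 hd
    have ht : 0 < |t| := abs_pos.2 (left_ne_zero_of_smul hd₀)
    have hinner : ⟪-∑ k, l k • a (u k), t • v⟫ = -(t * ∑ i, l i * ⟪a (u i), v⟫) := by
      simp only [inner_neg_left, sum_inner, real_inner_smul_left, real_inner_smul_right,
        Finset.mul_sum]
    rw [hinner, abs_neg, abs_mul, norm_smul, hv, mul_one, Real.norm_eq_abs, mul_comm ε] at hl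
    exact le_of_mul_le_mul_left hl ht
  calc _ ≤ Measure.pi μ {l | |∑ i, l i * ⟪a (u i), v⟫| ≤ ε} := measure_mono hsub
    _ ≤ ENNReal.ofReal (2 * ε / |⟪a (u k), v⟫|) :=
      measure_pi_setOf_abs_sum_mul_le μ (hμ k) (abs_pos.1 (hδ.trans_le hk)) ε
    _ ≤ ENNReal.ofReal (2 * ε / deltaRows a) := by
      rcases le_or_gt 0 ε with hε | hε
      · exact ENNReal.ofReal_le_ofReal (div_le_div_of_nonneg_left (by linarith) hδ hk)
      · exact ENNReal.ofReal_le_ofReal_iff'.2 (Or.inr (div_nonpos_of_nonpos_of_nonneg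
          (by linarith) (abs_nonneg _)))

theorem measure_pi_exists_neighboring_le {m n : ℕ}
    {a : Fin m → EuclideanSpace ℝ (Fin (n + 1))} (b : Fin m → ℝ) (hnorm : ∀ i, ‖a i‖ = 1)
    {u : Fin (n + 1) → Fin m} (hu : LinearIndependent ℝ (a ∘ u))
    (μ : Fin (n + 1) → Measure ℝ) [∀ i, IsProbabilityMeasure (μ i)] (hμ : ∀ i, μ i ≤ volume)
    (ε : ℝ) :
    Measure.pi μ {l | ∃ z₁ z₂, Neighboring a b z₁ z₂ ∧
        |⟪-∑ k, l k • a (u k), z₂ - z₁⟫| ≤ ε * ‖z₂ - z₁‖} ≤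
      m ^ n * ENNReal.ofReal (2 * ε / deltaRows a) := by
  classical
  set T := (Finset.univ.powersetCard n).filter
    fun s : Finset (Fin m) => LinearIndependent ℝ (fun i : s => a i)
  have hsub : {l : Fin (n + 1) → ℝ | ∃ z₁ z₂, Neighboring a b z₁ z₂ ∧
      |⟪-∑ k, l k • a (u k), z₂ - z₁⟫| ≤ ε * ‖z₂ - z₁‖} ⊆
      ⋃ s ∈ T, nearlyOrthogonalParams a u (Submodule.span ℝ (a '' s))ᗮ ε := by
    rintro l ⟨z₁, z₂, hz, hl⟩
    obtain ⟨s, hs, hli, hd, hd₀⟩ := hz.exists_sub_mem_orthogonal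
    have hsT : s ∈ T := Finset.mem_filter.2 ⟨Finset.mem_powersetCard.2 ⟨s.subset_univ, hs⟩, hli⟩
    exact Set.mem_biUnion hsT ⟨z₂ - z₁, hd, hd₀, hl⟩
  have hcard : T.card ≤ m ^ n :=
    ((Finset.card_filter_le _ _).trans (by simp)).trans (Nat.choose_le_pow m n)
  calc _ ≤ ∑ s ∈ T, Measure.pi μ (nearlyOrthogonalParams a u (Submodule.span ℝ (a '' s))ᗮ ε) :=
        (measure_mono hsub).trans (measure_biUnion_finset_le _ _)
    _ ≤ T.card • ENNReal.ofReal (2 * ε / deltaRows a) := by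
        refine Finset.sum_le_card_nsmul _ _ _ fun s hs => ?_
        obtain ⟨hs, hli⟩ := Finset.mem_filter.1 hs
        exact measure_pi_nearlyOrthogonalParams_le hnorm hu μ hμ (Finset.mem_powersetCard.1 hs).2
          hli ε
    _ ≤ m ^ n * ENNReal.ofReal (2 * ε / deltaRows a) := by
        rw [nsmul_eq_mul]
        gcongr
        exact_mod_cast hcard

theorem stmt13_general {m n : ℕ} (a : Fin m → EuclideanSpace ℝ (Fin n)) (b : Fin m → ℝ)
    (hnorm : ∀ i, ‖a i‖ = 1)
    (u : Fin n → Fin m) (hu : LinearIndependent ℝ (a ∘ u))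
    (ε : ℝ) :
    Measure.pi (fun _ : Fin n => volume.restrict (Set.Ioc (0:ℝ) 1))
        {l : Fin n → ℝ | ∃ z₁ z₂, Neighboring a b z₁ z₂ ∧
          |⟪-∑ k, l k • a (u k), z₂ - z₁⟫| ≤ ε * ‖z₂ - z₁‖} ≤
      ENNReal.ofReal (2 * (m : ℝ) ^ n * ε / deltaRows a) := by
  cases n with
  | zero =>
    refine le_of_eq_of_le (measure_mono_null ?_ measure_empty) zero_le
    rintro l ⟨z₁, z₂, ⟨-, -, hne, -⟩, -⟩
    exact hne (Subsingleton.elim z₁ z₂)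
  | succ n =>
    have : IsProbabilityMeasure (volume.restrict (Set.Ioc (0:ℝ) 1)) := ⟨by simp⟩
    have hm : 1 ≤ m := Fin.pos (u 0)
    calc _ ≤ m ^ n * ENNReal.ofReal (2 * ε / deltaRows a) :=
          measure_pi_exists_neighboring_le b hnorm hu _ (fun _ => Measure.restrict_le_self) ε
      _ ≤ m ^ (n + 1) * ENNReal.ofReal (2 * ε / deltaRows a) := by
          gcongr
          exacts [mod_cast hm, n.le_succ]
      _ = ENNReal.ofReal (2 * (m : ℝ) ^ (n + 1) * ε / deltaRows a) := by
          rw [← ENNReal.ofReal_natCast, ← ENNReal.ofReal_pow (Nat.cast_nonneg m),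
            ← ENNReal.ofReal_mul (by positivity)]
          ring_nf

/-- Let A have unit-norm rows a₁, …, a_m and let u₁, …, uₙ be n linearly
independent rows of A. If λ is uniform on (0,1]ⁿ and w₁ = −Σ λₖuₖ, then the probability
that there exist two neighboring vertices z₁, z₂ of P = {x : Ax ≤ b} with
|w₁ᵀ(z₂ − z₁)| ≤ ε·‖z₂ − z₁‖ is at most 2mⁿε/δ(A). -/
theorem stmt13 {m n : ℕ} (a : Fin m → EuclideanSpace ℝ (Fin n)) (b : Fin m → ℝ)
    (hnorm : ∀ i, ‖a i‖ = 1)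
    (u : Fin n → Fin m) (hu : LinearIndependent ℝ (a ∘ u))
    (ε : ℝ) (hε : 0 < ε) :
    Measure.pi (fun _ : Fin n => volume.restrict (Set.Ioc (0:ℝ) 1))
        {l : Fin n → ℝ | ∃ z₁ z₂, Neighboring a b z₁ z₂ ∧
          |⟪-∑ k, l k • a (u k), z₂ - z₁⟫| ≤ ε * ‖z₂ - z₁‖} ≤
      ENNReal.ofReal (2 * (m : ℝ) ^ n * ε / deltaRows a) :=
  stmt13_general a b hnorm u hu ε
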